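/- arXiv:2305.13958 — 3 statements merged into one kernel-verified Lean document; each statement's English description precedes it below -/
import Mathlib

section
/- Let n = 2m+1 ≥ 3 be odd. With h = ∑_{i=1}^n (−1)^{i+1} E_{ii} and, for 1 ≤ k ≤ m, e_k = ∑_{l=1}^{m−k+1} (E_{2l−1, 2k+2l−2} − E_{2k+2l−1, 2l}) in M_n(ℂ), the following commutator relations hold: h·e_k − e_k·h = 2·e_k for all 1 ≤ k ≤ m, and e_k·e_{k'} − e_{k'}·e_k = 0 for all 1 ≤ k, k' ≤ m. -/
open Matrix

/-- `h = ∑_{i=1}^n (-1)^{i+1} E_{ii}` (written with 0-indexed `i`). -/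
noncomputable def hMat (n : ℕ) : Matrix (Fin n) (Fin n) ℂ :=
  ∑ i : Fin n, ((-1 : ℂ)) ^ (i : ℕ) • Matrix.single i i 1

/-- For `n = 2m+1` odd and `1 ≤ k ≤ m`,
`e_k = ∑_{l=1}^{m-k+1} (E_{2l-1, 2k+2l-2} - E_{2k+2l-1, 2l})` (1-indexed entries). -/
noncomputable def eMatOdd (m k : ℕ) : Matrix (Fin (2 * m + 1)) (Fin (2 * m + 1)) ℂ :=
  if h : 1 ≤ k ∧ k ≤ m then
    ∑ l : Fin (m - k + 1),
      (Matrix.single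
          (⟨2 * l.1, by have := l.2; omega⟩ : Fin (2 * m + 1))
          (⟨2 * k + 2 * l.1 - 1, by have := l.2; omega⟩ : Fin (2 * m + 1)) 1 -
        Matrix.single
          (⟨2 * k + 2 * l.1, by have := l.2; omega⟩ : Fin (2 * m + 1))
          (⟨2 * l.1 + 1, by have := l.2; omega⟩ : Fin (2 * m + 1)) 1)
  else 0


/-!
Index the rows and columns of `M_n` from `0`. Every `e_k` is supported on the entries
(even row, odd column), a subspace `V` on which conjugation by the sign matrix
`h = diag((-1)^i)` acts as multiplication by `-1`; hence `h e - e h = 2 e` for `e ∈ V`.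
Moreover `V · V = 0`, since a product `e_{ac} e'_{cb}` needs `c` both odd and even, so any two
elements of `V` commute.
-/

variable {R : Type*} {n : ℕ}

def evenRowOddCol (R : Type*) [Semiring R] (n : ℕ) : Submodule R (Matrix (Fin n) (Fin n) R) where
  carrier := {M | ∀ a b : Fin n, ¬(Even (a : ℕ) ∧ Odd (b : ℕ)) → M a b = 0}
  zero_mem' _ _ _ := rfl
  add_mem' hM hN a b hab := by simp [hM a b hab, hN a b hab]
  smul_mem' c M hM a b hab := by simp [hM a b hab]

lemma single_mem_evenRowOddCol [Semiring R] {a b : Fin n} (ha : Even (a : ℕ))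
    (hb : Odd (b : ℕ)) (c : R) : Matrix.single a b c ∈ evenRowOddCol R n := by
  intro i j hij
  refine single_apply_of_ne a b c i j ?_
  rintro ⟨rfl, rfl⟩
  exact hij ⟨ha, hb⟩

lemma mul_eq_zero_of_mem_evenRowOddCol [Semiring R] {M N : Matrix (Fin n) (Fin n) R}
    (hM : M ∈ evenRowOddCol R n) (hN : N ∈ evenRowOddCol R n) : M * N = 0 := by
  ext a b
  rw [mul_apply, Matrix.zero_apply]
  refine Finset.sum_eq_zero fun c _ => ?_
  rcases Nat.even_or_odd c with hc | hc
  · rw [hM a c fun h => Nat.not_odd_iff_even.2 hc h.2, zero_mul]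
  · rw [hN c b fun h => Nat.not_even_iff_odd.2 hc h.1, mul_zero]

lemma diagonal_negOnePow_mul_sub_mul_diagonal [Ring R] {M : Matrix (Fin n) (Fin n) R}
    (hM : M ∈ evenRowOddCol R n) :
    diagonal (fun i : Fin n => (-1 : R) ^ (i : ℕ)) * M -
        M * diagonal (fun i : Fin n => (-1 : R) ^ (i : ℕ)) = (2 : R) • M := by
  ext a b
  rw [Matrix.sub_apply, diagonal_mul, mul_diagonal, Matrix.smul_apply, smul_eq_mul]
  by_cases hab : Even (a : ℕ) ∧ Odd (b : ℕ)
  · rw [hab.1.neg_one_pow, hab.2.neg_one_pow, one_mul, mul_neg_one, sub_neg_eq_add, two_mul]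
  · simp [hM a b hab]

lemma hMat_eq_diagonal (n : ℕ) :
    hMat n = diagonal (fun i : Fin n => (-1 : ℂ) ^ (i : ℕ)) := by
  simp only [hMat, smul_single, smul_eq_mul, mul_one, sum_single_eq_diagonal]

lemma eMatOdd_mem_evenRowOddCol (m k : ℕ) : eMatOdd m k ∈ evenRowOddCol ℂ (2 * m + 1) := by
  unfold eMatOdd
  split_ifs with hk
  · refine Submodule.sum_mem _ fun l _ => Submodule.sub_mem _ ?_ ?_ <;>
      refine single_mem_evenRowOddCol ?_ ?_ _
    all_goals
      simp only [Nat.even_iff, Nat.odd_iff]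
      omega
  · exact Submodule.zero_mem _

theorem stmt_11_general (m : ℕ) :
    (∀ k, 1 ≤ k → k ≤ m →
      hMat (2 * m + 1) * eMatOdd m k - eMatOdd m k * hMat (2 * m + 1) =
        (2 : ℂ) • eMatOdd m k) ∧
    (∀ k k', 1 ≤ k → k ≤ m → 1 ≤ k' → k' ≤ m →
      eMatOdd m k * eMatOdd m k' - eMatOdd m k' * eMatOdd m k = 0) := by
  refine ⟨fun k _ _ => ?_, fun k k' _ _ _ _ => ?_⟩
  · rw [hMat_eq_diagonal]
    exact diagonal_negOnePow_mul_sub_mul_diagonal (eMatOdd_mem_evenRowOddCol m k)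
  · have hk := eMatOdd_mem_evenRowOddCol m k
    have hk' := eMatOdd_mem_evenRowOddCol m k'
    rw [mul_eq_zero_of_mem_evenRowOddCol hk hk', mul_eq_zero_of_mem_evenRowOddCol hk' hk,
      sub_zero]

/-- For odd `n = 2m+1 ≥ 3`, the commutator relations
`[h, e_k] = 2 e_k` and `[e_k, e_{k'}] = 0` hold for all `1 ≤ k, k' ≤ m`. -/
theorem stmt_11 (m : ℕ) (hm : 1 ≤ m) :
    (∀ k, 1 ≤ k → k ≤ m →
      hMat (2 * m + 1) * eMatOdd m k - eMatOdd m k * hMat (2 * m + 1) =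
        (2 : ℂ) • eMatOdd m k) ∧
    (∀ k k', 1 ≤ k → k ≤ m → 1 ≤ k' → k' ≤ m →
      eMatOdd m k * eMatOdd m k' - eMatOdd m k' * eMatOdd m k = 0) :=
  stmt_11_general m
end

section
/- Let n = 2m ≥ 2 be even and let A_n be the n×n upper-shift matrix over ℂ. Define h = ∑_{i=1}^n (−1)^{i+1} E_{ii}, and for 1 ≤ k ≤ m−1 define e_k = ∑_{l=1}^{m−k} (E_{2l−1, 2k+2l−1} − E_{2k+2l, 2l}). Then the solution set {X ∈ M_n(ℂ) | Xᵀ A_n + A_n X = 0} equals the ℂ-linear span of {h, e_1, …, e_{m−1}}. -/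
/-!
Entrywise (0-indexed), `Xᵀ A_n + A_n X = 0` says `X (a+1) (b+1) = -X b a`, `X (a+1) 0 = 0` and
`X b (n-1) = 0`. The first relation lowers `a + b` by two, so a solution whose first row vanishes
is zero. Applied twice it gives `X (a+2) (b+2) = X a b`, which for even `n` carries an odd entry
`X 0 d` of the first row into the last column, where it vanishes. As `h` and the `e_k` are solutions
whose first rows are the unit vectors at positions `0` and `2k`, subtracting the matching
combination from a solution leaves a solution with zero first row.
-/

open Matrix

def shiftMat (n : ℕ) : Matrix (Fin n) (Fin n) ℂ :=
  Matrix.of fun i j => if (j : ℕ) = (i : ℕ) + 1 then 1 else 0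

/-- For `n = 2m` even and `1 ≤ k ≤ m - 1`,
`e_k = ∑_{l=1}^{m-k} (E_{2l-1, 2k+2l-1} - E_{2k+2l, 2l})` (1-indexed entries). -/
noncomputable def eMatEven (m k : ℕ) : Matrix (Fin (2 * m)) (Fin (2 * m)) ℂ :=
  if h : 1 ≤ k ∧ k + 1 ≤ m then
    ∑ l : Fin (m - k),
      (Matrix.single
          (⟨2 * l.1, by have := l.2; omega⟩ : Fin (2 * m))
          (⟨2 * k + 2 * l.1, by have := l.2; omega⟩ : Fin (2 * m)) 1 -
        Matrix.single
          (⟨2 * k + 2 * l.1 + 1, by have := l.2; omega⟩ : Fin (2 * m))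
          (⟨2 * l.1 + 1, by have := l.2; omega⟩ : Fin (2 * m)) 1)
  else 0

section Entries

variable {n : ℕ}

lemma mul_shiftMat_apply (M : Matrix (Fin n) (Fin n) ℂ) (i j : Fin n) :
    (M * shiftMat n) i j = if h : 1 ≤ (j : ℕ) then M i ⟨j - 1, by omega⟩ else 0 := by
  simp only [mul_apply, shiftMat, of_apply, mul_ite, mul_one, mul_zero]
  split_ifs with h
  · rw [Finset.sum_eq_single ⟨j - 1, by omega⟩
      (fun k _ hk => if_neg fun hjk => hk (Fin.ext (by simp only; omega))) (by simp)]
    exact if_pos (by simp only; omega)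
  · exact Finset.sum_eq_zero fun k _ => if_neg (by omega)

lemma shiftMat_mul_apply (M : Matrix (Fin n) (Fin n) ℂ) (i j : Fin n) :
    (shiftMat n * M) i j = if h : (i : ℕ) + 1 < n then M ⟨i + 1, h⟩ j else 0 := by
  simp only [mul_apply, shiftMat, of_apply, ite_mul, one_mul, zero_mul]
  split_ifs with h
  · rw [Finset.sum_eq_single ⟨i + 1, h⟩
      (fun k _ hk => if_neg fun hik => hk (Fin.ext (by simp only; omega))) (by simp)]
    exact if_pos rfl
  · exact Finset.sum_eq_zero fun k _ => if_neg (by omega)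

lemma hMat_apply (i j : Fin n) : hMat n i j = if i = j then (-1 : ℂ) ^ (i : ℕ) else 0 := by
  rcases eq_or_ne i j with rfl | h
  · simp [hMat, Matrix.sum_apply, single_apply, eq_comm]
  · rw [if_neg h, hMat, Matrix.sum_apply]
    refine Finset.sum_eq_zero fun c _ => ?_
    rw [Matrix.smul_apply, single_apply, if_neg fun hc => h (hc.1.symm.trans hc.2), smul_zero]

lemma hMat_apply_zero_left (h : 0 < n) (j : Fin n) :
    hMat n ⟨0, h⟩ j = if (j : ℕ) = 0 then 1 else 0 := by
  simp [hMat_apply, Fin.ext_iff, eq_comm]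

end Entries

section EMatEven

variable {m k : ℕ}

lemma eMatEven_eq_zero (hk : ¬(1 ≤ k ∧ k + 1 ≤ m)) : eMatEven m k = 0 := dif_neg hk

lemma eMatEven_apply (hk : 1 ≤ k ∧ k + 1 ≤ m) (i j : Fin (2 * m)) :
    eMatEven m k i j =
      if (i : ℕ) % 2 = 0 ∧ (j : ℕ) = i + 2 * k then 1
      else if (j : ℕ) % 2 = 1 ∧ (i : ℕ) = j + 2 * k then -1 else 0 := by
  have hi := i.isLt
  have hj := j.isLt
  rw [eMatEven, dif_pos hk, Matrix.sum_apply]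
  simp only [Matrix.sub_apply, single_apply, Fin.ext_iff]
  -- the only summand that can be nonzero is the one with `l = min i j / 2`
  rw [Fin.sum_univ_eq_sum_range (fun l => (if 2 * l = i ∧ 2 * k + 2 * l = j then (1 : ℂ) else 0) -
      if 2 * k + 2 * l + 1 = i ∧ 2 * l + 1 = j then 1 else 0),
    Finset.sum_eq_single (min (i : ℕ) j / 2)]
  · split_ifs <;> first | omega | norm_num
  · intro l _ hl
    rw [if_neg (by omega), if_neg (by omega), sub_zero]
  · intro hl
    rw [Finset.mem_range] at hl
    rw [if_neg (by omega), if_neg (by omega), sub_zero]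

lemma eMatEven_apply_zero_left (h : 0 < 2 * m) (j : Fin (2 * m)) :
    eMatEven m k ⟨0, h⟩ j = if 1 ≤ k ∧ (j : ℕ) = 2 * k then 1 else 0 := by
  by_cases hk : 1 ≤ k ∧ k + 1 ≤ m
  · simp only [eMatEven_apply hk, zero_add, true_and]
    split_ifs <;> first | rfl | omega
  · rw [eMatEven_eq_zero hk, Matrix.zero_apply, if_neg (by omega)]

end EMatEven

def solLie (n : ℕ) : Submodule ℂ (Matrix (Fin n) (Fin n) ℂ) where
  carrier := {X | Xᵀ * shiftMat n + shiftMat n * X = 0}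
  zero_mem' := by simp
  add_mem' {X Y} hX hY := by
    simp only [Set.mem_ofPred_eq, transpose_add, add_mul, mul_add] at hX hY ⊢
    rw [add_add_add_comm, hX, hY, add_zero]
  smul_mem' c X hX := by
    simp only [Set.mem_ofPred_eq, transpose_smul, smul_mul, Matrix.mul_smul] at hX ⊢
    rw [← smul_add, hX, smul_zero]

namespace solLie

variable {n : ℕ} {X : Matrix (Fin n) (Fin n) ℂ}

lemma mem_iff_forall_apply : X ∈ solLie n ↔ ∀ i j : Fin n,
    (if h : 1 ≤ (j : ℕ) then X ⟨j - 1, by omega⟩ i else 0) +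
      (if h : (i : ℕ) + 1 < n then X ⟨i + 1, h⟩ j else 0) = 0 := by
  change Xᵀ * shiftMat n + shiftMat n * X = 0 ↔ _
  rw [← Matrix.ext_iff]
  simp only [Matrix.add_apply, mul_shiftMat_apply, shiftMat_mul_apply, transpose_apply,
    Matrix.zero_apply]

lemma apply_succ_succ (hX : X ∈ solLie n) (a b : ℕ) (ha : a + 1 < n) (hb : b + 1 < n) :
    X ⟨a + 1, ha⟩ ⟨b + 1, hb⟩ = -X ⟨b, by omega⟩ ⟨a, by omega⟩ := by
  simpa [eq_neg_iff_add_eq_zero, add_comm, ha] using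
    mem_iff_forall_apply.1 hX ⟨a, by omega⟩ ⟨b + 1, hb⟩

lemma apply_succ_zero (hX : X ∈ solLie n) (a : ℕ) (ha : a + 1 < n) :
    X ⟨a + 1, ha⟩ ⟨0, by omega⟩ = 0 := by
  simpa [ha] using mem_iff_forall_apply.1 hX ⟨a, by omega⟩ ⟨0, by omega⟩

lemma apply_last (hX : X ∈ solLie n) (b : ℕ) (hb : b + 1 < n) :
    X ⟨b, by omega⟩ ⟨n - 1, by omega⟩ = 0 := by
  simpa [show n - 1 + 1 = n by omega] using mem_iff_forall_apply.1 hX ⟨n - 1, by omega⟩ ⟨b + 1, hb⟩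

lemma apply_add_two_mul (hX : X ∈ solLie n) (t a b : ℕ) (ha : a + 2 * t < n)
    (hb : b + 2 * t < n) :
    X ⟨a + 2 * t, ha⟩ ⟨b + 2 * t, hb⟩ = X ⟨a, by omega⟩ ⟨b, by omega⟩ := by
  induction t with
  | zero => rfl
  | succ t ih =>
    show X ⟨a + 2 * t + 1 + 1, ha⟩ ⟨b + 2 * t + 1 + 1, hb⟩ = _
    rw [← ih (by omega) (by omega), apply_succ_succ hX (a + 2 * t + 1) (b + 2 * t + 1),
      apply_succ_succ hX (b + 2 * t) (a + 2 * t), neg_neg]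

lemma eq_zero_of_row_zero (hX : X ∈ solLie n) (h0 : ∀ i j : Fin n, (i : ℕ) = 0 → X i j = 0) :
    X = 0 := by
  suffices ∀ s a b (ha : a < n) (hb : b < n), a + b = s → X ⟨a, ha⟩ ⟨b, hb⟩ = 0 from
    Matrix.ext fun i j => this _ i j i.2 j.2 rfl
  intro s
  induction s using Nat.strong_induction_on with
  | _ s ih =>
    rintro (_ | a) (_ | b) ha hb rfl
    · exact h0 _ _ rfl
    · exact h0 _ _ rfl
    · exact apply_succ_zero hX a ha
    · rw [apply_succ_succ hX a b, ih (b + a) (by omega) b a _ _ rfl, neg_zero]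

end solLie

lemma hMat_mem_solLie (n : ℕ) : hMat n ∈ solLie n := by
  refine solLie.mem_iff_forall_apply.2 fun i j => ?_
  simp only [hMat_apply, Fin.ext_iff]
  rcases j with ⟨_ | j, hj⟩
  · simp
  · rcases eq_or_ne j i with rfl | h
    · simp [hj, pow_succ]
    · simp [h, h.symm]

lemma eMatEven_mem_solLie (m k : ℕ) : eMatEven m k ∈ solLie (2 * m) := by
  by_cases hk : 1 ≤ k ∧ k + 1 ≤ m
  · refine solLie.mem_iff_forall_apply.2 fun i j => ?_
    simp only [eMatEven_apply hk]
    split_ifs <;> first | omega | norm_num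
  · rw [eMatEven_eq_zero hk]
    exact zero_mem _

namespace solLie

variable {m : ℕ} {X : Matrix (Fin (2 * m)) (Fin (2 * m)) ℂ}

lemma apply_zero_odd (hX : X ∈ solLie (2 * m)) (d : ℕ) (hd : d < 2 * m) (hodd : d % 2 = 1) :
    X ⟨0, by omega⟩ ⟨d, hd⟩ = 0 := by
  rw [← apply_add_two_mul hX ((2 * m - 1 - d) / 2) 0 d (by omega) (by omega)]
  convert apply_last hX (2 * m - 1 - d) (by omega) using 2 <;> simp only [Fin.mk.injEq] <;> omega

/-- The summand for `k = 0` is zero, since `eMatEven m 0 = 0`. -/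
lemma eq_smul_hMat_add_sum_smul_eMatEven (hm : 1 ≤ m) (hX : X ∈ solLie (2 * m)) :
    X = X ⟨0, by omega⟩ ⟨0, by omega⟩ • hMat (2 * m) +
      ∑ k : Fin m, X ⟨0, by omega⟩ ⟨2 * k, by omega⟩ • eMatEven m k := by
  rw [← sub_eq_zero]
  refine eq_zero_of_row_zero (sub_mem hX (add_mem (Submodule.smul_mem _ _ (hMat_mem_solLie _))
    (Submodule.sum_mem _ fun k _ => Submodule.smul_mem _ _ (eMatEven_mem_solLie m k)))) ?_
  rintro ⟨i, hi⟩ ⟨d, hd⟩ (rfl : i = 0)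
  simp only [Matrix.sub_apply, Matrix.add_apply, Matrix.smul_apply, Matrix.sum_apply,
    hMat_apply_zero_left, eMatEven_apply_zero_left, smul_eq_mul, mul_ite, mul_one, mul_zero]
  obtain rfl | hd0 := Nat.eq_zero_or_pos d
  · rw [if_pos rfl, Finset.sum_eq_zero fun x _ => if_neg (by omega), add_zero, sub_self]
  rw [if_neg hd0.ne', zero_add]
  obtain ⟨k, rfl | rfl⟩ := Nat.even_or_odd' d
  · rw [Finset.sum_eq_single ⟨k, by omega⟩
      (fun x _ hx => if_neg fun h => hx (Fin.ext (show (x : ℕ) = k by omega))) (by simp),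
      if_pos ⟨show 1 ≤ k by omega, rfl⟩, sub_self]
  · rw [apply_zero_odd hX _ hd (by omega), Finset.sum_eq_zero fun x _ => if_neg (by omega),
      sub_zero]

end solLie

/-- For even `n = 2m ≥ 2`, the solution space of `Xᵀ A_n + A_n X = 0`
is the linear span of `h, e_1, …, e_{m-1}`. -/
theorem stmt_12 (m : ℕ) (hm : 1 ≤ m) :
    {X : Matrix (Fin (2 * m)) (Fin (2 * m)) ℂ |
        Xᵀ * shiftMat (2 * m) + shiftMat (2 * m) * X = 0} =
      ↑(Submodule.span ℂ
        (insert (hMat (2 * m)) {M | ∃ kk, 1 ≤ kk ∧ kk + 1 ≤ m ∧ M = eMatEven m kk})) := by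
  have span_le : Submodule.span ℂ
      (insert (hMat (2 * m)) {M | ∃ kk, 1 ≤ kk ∧ kk + 1 ≤ m ∧ M = eMatEven m kk}) ≤
        solLie (2 * m) := by
    rw [Submodule.span_le]
    rintro _ (rfl | ⟨k, -, -, rfl⟩)
    · exact hMat_mem_solLie _
    · exact eMatEven_mem_solLie m k
  refine Set.Subset.antisymm (fun X hX => ?_) span_le
  rw [SetLike.mem_coe, solLie.eq_smul_hMat_add_sum_smul_eMatEven hm hX]
  refine add_mem (Submodule.smul_mem _ _ (Submodule.subset_span (Set.mem_insert _ _)))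
    (Submodule.sum_mem _ fun k _ => Submodule.smul_mem _ _ ?_)
  by_cases hk : 1 ≤ (k : ℕ)
  · exact Submodule.subset_span (Set.mem_insert_of_mem _ ⟨k, hk, k.2, rfl⟩)
  · rw [eMatEven_eq_zero (by omega)]
    exact zero_mem _
end

section
/- Let n ≥ 2 be even and let A_n be the n×n upper-shift matrix over ℂ. Then any two solutions of the linear equation defining the Lie algebra of Sol_{A_n} commute: if X, Y ∈ M_n(ℂ) satisfy Xᵀ A_n + A_n X = 0 and Yᵀ A_n + A_n Y = 0, then X·Y = Y·X. In particular, the Lie algebra {X ∈ M_n(ℂ) | Xᵀ A_n + A_n X = 0} is abelian. -/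
/-!
Entrywise, `Xᵀ A_n + A_n X = 0` says `X (i+1) (j+1) = -X j i` and `X (i+1) 0 = 0` (entries
outside the matrix read as zero). So `X` is determined by its first row `r`: row `i` is
`r (j - i)` for `j ≥ i` if `i` is even, and `-r (i - j)` for `j ≤ i` if `i` is odd. Applying the
relation twice moves `X 0 m` along its diagonal to the last column, which vanishes; when `n` is
even this happens exactly for odd `m`, so `r` is supported on even indices. Then `X` only couples
indices of equal parity, and the entry `(a, b)` of `X Y` is the coefficient of degree `|b - a|` of
the product of the generating series of the first rows of `X` and `Y`, which is symmetric.
-/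

open Matrix

open Finset PowerSeries

section natEntry

variable {R : Type*} [Zero R] {n : ℕ}

def natEntry (X : Matrix (Fin n) (Fin n) R) (i j : ℕ) : R :=
  if h : i < n ∧ j < n then X ⟨i, h.1⟩ ⟨j, h.2⟩ else 0

theorem natEntry_fin (X : Matrix (Fin n) (Fin n) R) (a b : Fin n) :
    natEntry X a b = X a b :=
  dif_pos ⟨a.2, b.2⟩

theorem natEntry_of_not_lt (X : Matrix (Fin n) (Fin n) R) {i j : ℕ} (h : ¬(i < n ∧ j < n)) :
    natEntry X i j = 0 :=
  dif_neg h

end natEntry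

section shiftEquation

variable {n : ℕ} (X : Matrix (Fin n) (Fin n) ℂ)

theorem shiftMat_mul_apply_s13 (a b : Fin n) : (shiftMat n * X) a b = natEntry X (a + 1) b := by
  rw [mul_apply]
  by_cases ha : (a : ℕ) + 1 < n
  · rw [sum_eq_single ⟨a + 1, ha⟩, ← natEntry_fin X]
    · simp [shiftMat]
    · intro k _ hk
      have : (k : ℕ) ≠ a + 1 := fun h => hk (Fin.ext h)
      simp [shiftMat, this]
    · simp
  · rw [natEntry_of_not_lt X (by omega)]
    refine sum_eq_zero fun k _ => ?_
    have : (k : ℕ) ≠ a + 1 := by omega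
    simp [shiftMat, this]

theorem transpose_mul_shiftMat_apply_zero (a : Fin n) (h : 0 < n) :
    (Xᵀ * shiftMat n) a ⟨0, h⟩ = 0 := by
  simp [mul_apply, shiftMat]

theorem transpose_mul_shiftMat_apply_succ (a : Fin n) {j : ℕ} (hj : j + 1 < n) :
    (Xᵀ * shiftMat n) a ⟨j + 1, hj⟩ = natEntry X j a := by
  rw [mul_apply, sum_eq_single ⟨j, by omega⟩, transpose_apply, ← natEntry_fin X]
  · simp [shiftMat]
  · intro k _ hk
    have : j ≠ k := fun h => hk (Fin.ext h.symm)
    simp [shiftMat, this]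
  · simp

variable {X}

theorem natEntry_succ_zero (hX : Xᵀ * shiftMat n + shiftMat n * X = 0) (i : ℕ) :
    natEntry X (i + 1) 0 = 0 := by
  by_cases hi : i + 1 < n
  · have h := congrFun₂ hX ⟨i, by omega⟩ ⟨0, by omega⟩
    rwa [Matrix.add_apply, transpose_mul_shiftMat_apply_zero, shiftMat_mul_apply_s13, zero_add] at h
  · exact natEntry_of_not_lt X (by omega)

theorem natEntry_succ_succ (hX : Xᵀ * shiftMat n + shiftMat n * X = 0) (i : ℕ) {j : ℕ}
    (hj : j + 1 < n) :
    natEntry X (i + 1) (j + 1) = -natEntry X j i := by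
  by_cases hi : i < n
  · have h := congrFun₂ hX ⟨i, hi⟩ ⟨j + 1, hj⟩
    rw [Matrix.add_apply, transpose_mul_shiftMat_apply_succ, shiftMat_mul_apply_s13] at h
    exact eq_neg_of_add_eq_zero_right h
  · rw [natEntry_of_not_lt X (by omega), natEntry_of_not_lt X (by omega), neg_zero]

theorem natEntry_add_two (hX : Xᵀ * shiftMat n + shiftMat n * X = 0) {i j : ℕ} (hij : i ≤ j)
    (hj : j + 2 < n) :
    natEntry X (i + 2) (j + 2) = natEntry X i j := by
  rw [natEntry_succ_succ hX (i + 1) (by omega), natEntry_succ_succ hX j (by omega), neg_neg]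

theorem natEntry_last (hX : Xᵀ * shiftMat n + shiftMat n * X = 0) {j : ℕ} (hj : j + 1 < n) :
    natEntry X j (n - 1) = 0 := by
  have h := natEntry_succ_succ hX (n - 1) hj
  rwa [Nat.sub_add_cancel (by omega), natEntry_of_not_lt X (by omega), zero_eq_neg] at h

theorem natEntry_zero_of_odd (hX : Xᵀ * shiftMat n + shiftMat n * X = 0) (heven : Even n)
    {m : ℕ} (hm : Odd m) : natEntry X 0 m = 0 := by
  by_cases hmn : m < n
  · have along_diagonal :
        ∀ t, m + 2 * t < n → natEntry X (2 * t) (m + 2 * t) = natEntry X 0 m := by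
      intro t
      induction t with
      | zero => simp
      | succ t ih =>
        intro ht
        rw [← ih (by omega), ← natEntry_add_two hX (by omega : 2 * t ≤ m + 2 * t) (by omega)]
        ring_nf
    obtain ⟨t, ht⟩ : ∃ t, m + 2 * t = n - 1 := by
      obtain ⟨k, rfl⟩ := heven
      obtain ⟨l, rfl⟩ := hm
      exact ⟨k - l - 1, by omega⟩
    rw [← along_diagonal t (by omega), ht, natEntry_last hX]
    obtain ⟨l, rfl⟩ := hm
    omega
  · exact natEntry_of_not_lt X (by omega)

end shiftEquation

section solEntry

variable {R : Type*} [CommRing R] {r : ℕ → R}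

def solEntry (r : ℕ → R) (i j : ℕ) : R :=
  if Even i then (if i ≤ j then r (j - i) else 0) else (if j ≤ i then -r (i - j) else 0)

theorem solEntry_zero_left (r : ℕ → R) (j : ℕ) : solEntry r 0 j = r j := by
  simp [solEntry]

theorem solEntry_succ_zero (hr : ∀ m, Odd m → r m = 0) (i : ℕ) :
    solEntry r (i + 1) 0 = 0 := by
  rcases Nat.even_or_odd (i + 1) with h | h
  · simp [solEntry, h]
  · simp [solEntry, Nat.not_even_iff_odd.mpr h, hr _ h]

theorem solEntry_succ_succ (hr : ∀ m, Odd m → r m = 0) (i j : ℕ) :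
    solEntry r (i + 1) (j + 1) = -solEntry r j i := by
  have hsub : ∀ {a b}, b ≤ a → a % 2 ≠ b % 2 → r (a - b) = 0 :=
    fun _ h => hr _ (Nat.odd_iff.mpr (by omega))
  simp only [solEntry, Nat.even_add_one, Nat.even_iff, Nat.add_sub_add_right]
  split_ifs <;> try simp only [neg_neg, neg_zero, neg_eq_zero, zero_eq_neg]
  all_goals first
    | rfl | omega | exact hsub (by omega) (by omega) | exact (hsub (by omega) (by omega)).symm

theorem solEntry_mul_solEntry_of_even (hr : ∀ m, Odd m → r m = 0) (s : ℕ → R) {a : ℕ}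
    (ha : Even a) (k b : ℕ) :
    solEntry r a k * solEntry s k b = if a ≤ k ∧ k ≤ b then r (k - a) * s (b - k) else 0 := by
  by_cases hak : a ≤ k
  · rcases Nat.even_or_odd k with hk | hk
    · by_cases hkb : k ≤ b <;> simp [solEntry, ha, hk, hak, hkb]
    · simp [solEntry, ha, hak, hr _ (Nat.Odd.sub_even hak hk ha)]
  · simp [solEntry, ha, hak]

theorem solEntry_mul_solEntry_of_odd (hr : ∀ m, Odd m → r m = 0) (s : ℕ → R) {a : ℕ}
    (ha : Odd a) (k b : ℕ) :
    solEntry r a k * solEntry s k b = if b ≤ k ∧ k ≤ a then s (k - b) * r (a - k) else 0 := by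
  have ha' : ¬Even a := Nat.not_even_iff_odd.mpr ha
  by_cases hka : k ≤ a
  · rcases Nat.even_or_odd k with hk | hk
    · simp [solEntry, ha', hka, hr _ (Nat.Odd.sub_even hka ha hk)]
    · by_cases hbk : b ≤ k <;>
        simp [solEntry, ha', Nat.not_even_iff_odd.mpr hk, hka, hbk, mul_comm]
  · simp [solEntry, ha', hka]

end solEntry

theorem sum_range_ite_Icc {M : Type*} [AddCommMonoid M] (f : ℕ → M) {lo hi n : ℕ}
    (h : hi < n) :
    ∑ k ∈ range n, (if lo ≤ k ∧ k ≤ hi then f k else 0) = ∑ k ∈ Icc lo hi, f k := by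
  rw [← sum_filter]
  congr 1
  ext k
  simp only [mem_filter, mem_range, mem_Icc]
  omega

theorem sum_Icc_eq_coeff_mul {R : Type*} [Semiring R] (r s : ℕ → R) {lo hi : ℕ}
    (h : lo ≤ hi) :
    ∑ k ∈ Icc lo hi, r (k - lo) * s (hi - k) = coeff (hi - lo) (mk r * mk s) := by
  rw [coeff_mul,
    Nat.sum_antidiagonal_eq_sum_range_succ (fun i j => coeff i (mk r) * coeff j (mk s)),
    ← Ico_add_one_right_eq_Icc, sum_Ico_eq_sum_range, Nat.sub_add_comm h]
  refine sum_congr rfl fun k _ => ?_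
  rw [coeff_mk, coeff_mk, Nat.add_sub_cancel_left, Nat.sub_sub]

section solMatrix

variable {R : Type*} [CommRing R] {r : ℕ → R} {n : ℕ}

def solMatrix (n : ℕ) (r : ℕ → R) : Matrix (Fin n) (Fin n) R :=
  of fun a b => solEntry r a b

theorem solMatrix_mul_apply (hr : ∀ m, Odd m → r m = 0) (s : ℕ → R) (a b : Fin n) :
    (solMatrix n r * solMatrix n s) a b =
      if Even (a : ℕ) then (if a ≤ b then coeff ((b : ℕ) - a) (mk r * mk s) else 0)
      else (if b ≤ a then coeff ((a : ℕ) - b) (mk r * mk s) else 0) := by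
  rw [mul_apply]
  simp only [solMatrix, of_apply]
  rw [Fin.sum_univ_eq_sum_range (fun k => solEntry r a k * solEntry s k b)]
  split_ifs with ha hab hba
  · simp_rw [solEntry_mul_solEntry_of_even hr s ha]
    rw [sum_range_ite_Icc _ b.2, sum_Icc_eq_coeff_mul _ _ hab]
  · simp_rw [solEntry_mul_solEntry_of_even hr s ha]
    exact sum_eq_zero fun k _ => if_neg (by omega)
  · simp_rw [solEntry_mul_solEntry_of_odd hr s (Nat.not_even_iff_odd.mp ha)]
    rw [sum_range_ite_Icc _ a.2, sum_Icc_eq_coeff_mul _ _ hba, mul_comm]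
  · simp_rw [solEntry_mul_solEntry_of_odd hr s (Nat.not_even_iff_odd.mp ha)]
    exact sum_eq_zero fun k _ => if_neg (by omega)

theorem solMatrix_mul_comm {s : ℕ → R} (hr : ∀ m, Odd m → r m = 0)
    (hs : ∀ m, Odd m → s m = 0) :
    solMatrix n r * solMatrix n s = solMatrix n s * solMatrix n r := by
  ext a b
  rw [solMatrix_mul_apply hr, solMatrix_mul_apply hs, mul_comm (mk s)]

end solMatrix

section solution

variable {n : ℕ} {X : Matrix (Fin n) (Fin n) ℂ}

theorem natEntry_eq_solEntry (hX : Xᵀ * shiftMat n + shiftMat n * X = 0)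
    (hr : ∀ m, Odd m → natEntry X 0 m = 0) :
    ∀ {i j : ℕ}, i < n → j < n → natEntry X i j = solEntry (natEntry X 0) i j
  | 0, j, _, _ => (solEntry_zero_left _ j).symm
  | i + 1, 0, _, _ => by rw [natEntry_succ_zero hX, solEntry_succ_zero hr]
  | i + 1, j + 1, hi, hj => by
    rw [natEntry_succ_succ hX i hj, natEntry_eq_solEntry hX hr (by omega) (by omega),
      solEntry_succ_succ hr]
termination_by i j => i + j

theorem eq_solMatrix (hX : Xᵀ * shiftMat n + shiftMat n * X = 0) (heven : Even n) :
    X = solMatrix n (natEntry X 0) := by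
  ext a b
  rw [solMatrix, of_apply, ← natEntry_fin X,
    natEntry_eq_solEntry hX (fun _ => natEntry_zero_of_odd hX heven) a.2 b.2]

end solution

theorem stmt_13_general (n : ℕ) (heven : Even n)
    (X Y : Matrix (Fin n) (Fin n) ℂ)
    (hX : Xᵀ * shiftMat n + shiftMat n * X = 0)
    (hY : Yᵀ * shiftMat n + shiftMat n * Y = 0) :
    X * Y = Y * X := by
  rw [eq_solMatrix hX heven, eq_solMatrix hY heven]
  exact solMatrix_mul_comm (fun _ => natEntry_zero_of_odd hX heven)
    (fun _ => natEntry_zero_of_odd hY heven)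

/-- For even `n ≥ 2`, any two solutions of `Xᵀ A_n + A_n X = 0` commute;
in particular the Lie algebra `sol_{A_n}` is abelian. -/
theorem stmt_13 (n : ℕ) (hn : 2 ≤ n) (heven : Even n)
    (X Y : Matrix (Fin n) (Fin n) ℂ)
    (hX : Xᵀ * shiftMat n + shiftMat n * X = 0)
    (hY : Yᵀ * shiftMat n + shiftMat n * Y = 0) :
    X * Y = Y * X :=
  stmt_13_general n heven X Y hX hY
end
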